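/- arXiv:2105.12730 — 2 statements merged into one kernel-verified Lean document; each statement's English description precedes it below -/
import Mathlib

section
/- Let I ≥ 2 and let ℓ_j = j - 1 for j = 1, ..., i, with ℓ_i + 1 ≤ I. Then the product over j = 1 to i of (1 - ℓ_j / (C(I,2) - C(ℓ_j,2))) equals 1 - C(ℓ_{i+1}, 2)/C(I, 2), where ℓ_{i+1} = i and C(n,2) denotes the binomial coefficient n choose 2. -/
lemma choose2_lt {a b : ℕ} (h : a < b) (hb : 2 ≤ b) : a.choose 2 < b.choose 2 := by
  rw [Nat.choose_two_right, Nat.choose_two_right]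
  have h2 : 2 ∣ a * (a-1) := (Nat.even_mul_pred_self a).two_dvd
  have h3 : 2 ∣ b * (b-1) := (Nat.even_mul_pred_self b).two_dvd
  have : a * (a-1) < b * (b-1) := by
    rcases Nat.eq_zero_or_pos a with ha | ha
    · subst ha; simpa using Nat.mul_pos (by omega : 0 < b) (by omega : 0 < b - 1)
    · have := Nat.mul_lt_mul_of_lt_of_le h (by omega : a - 1 ≤ b - 1) (by omega)
      exact Nat.mul_lt_mul_of_lt_of_le h (by omega) (by omega)
  omega

/-- Telescoping of coalescence-avoidance probabilities (unobserved birth case,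
Theorem 2). With ℓ_j = j - 1, the product of the factors
1 - ℓ_j/(C(I,2) - C(ℓ_j,2)) over j = 1,…,i equals 1 - C(i,2)/C(I,2). -/
theorem stmt_1 (I i : ℕ) (hI : 2 ≤ I) (hi : i ≤ I) :
    (∏ j ∈ Finset.Icc 1 i,
        (1 - ((j - 1 : ℕ) : ℚ) /
          ((I.choose 2 : ℚ) - ((j - 1 : ℕ).choose 2 : ℚ))))
      = 1 - ((i.choose 2 : ℚ)) / (I.choose 2 : ℚ) := by
  induction i with
  | zero => simp
  | succ n ih =>
    have hn : n ≤ I := by omega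
    have hlt : n.choose 2 < I.choose 2 := choose2_lt (by omega) hI
    have hCpos : (0:ℚ) < (I.choose 2 : ℚ) := by
      exact_mod_cast Nat.zero_lt_of_lt hlt
    have hC0 : (I.choose 2 : ℚ) ≠ 0 := ne_of_gt hCpos
    have hdiff : (I.choose 2 : ℚ) - (n.choose 2 : ℚ) ≠ 0 := by
      have : (n.choose 2 : ℚ) < (I.choose 2 : ℚ) := by exact_mod_cast hlt
      linarith
    rw [Finset.prod_Icc_succ_top (by omega), ih hn]
    have hsucc : ((n+1).choose 2 : ℚ) = (n.choose 2 : ℚ) + n := by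
      have : (n+1).choose 2 = n.choose 2 + n := by
        rw [Nat.choose_succ_succ']; simp [Nat.choose_one_right]; omega
      exact_mod_cast this
    simp only [Nat.add_sub_cancel, hsucc]
    field_simp
    ring
end

section
/- Let I ≥ 2 and ℓ_j = j - 1 for j ≥ 1 with ℓ_m < I. Then (1 / (C(I,2) - C(ℓ_m,2))) · ∏_{j=1}^{m-1} (1 - ℓ_j / (C(I,2) - C(ℓ_j,2))) = 1 / C(I,2). -/
lemma choose_two_lt (k I : ℕ) (hI : 2 ≤ I) (hk : k < I) :
    ((k.choose 2 : ℚ)) < (I.choose 2 : ℚ) := by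
  rw [Nat.cast_choose_two, Nat.cast_choose_two]
  have h1 : (k : ℚ) + 1 ≤ I := by exact_mod_cast hk
  have h2 : (0 : ℚ) ≤ k := by positivity
  have h3 : (2 : ℚ) ≤ I := by exact_mod_cast hI
  nlinarith

lemma prod_aux (I : ℕ) (hI : 2 ≤ I) :
    ∀ n, n < I →
      (∏ j ∈ Finset.Icc 1 n,
        (1 - ((j - 1 : ℕ) : ℚ) /
          ((I.choose 2 : ℚ) - ((j - 1 : ℕ).choose 2 : ℚ))))
      = ((I.choose 2 : ℚ) - (n.choose 2 : ℚ)) / (I.choose 2 : ℚ) := by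
  intro n
  induction n with
  | zero =>
    intro _
    have hC : (0 : ℚ) < (I.choose 2 : ℚ) := by
      have := choose_two_lt 0 I hI (by omega); simpa using this
    simp [Nat.choose, div_self hC.ne']
  | succ n ih =>
    intro hn
    have hn' : n < I := by omega
    rw [Finset.prod_Icc_succ_top (by omega), ih hn']
    have hC : (0 : ℚ) < (I.choose 2 : ℚ) := by
      have := choose_two_lt 0 I hI (by omega); simpa using this
    have hCn : (0 : ℚ) < (I.choose 2 : ℚ) - (n.choose 2 : ℚ) :=
      sub_pos.mpr (choose_two_lt n I hI hn')
    have hsucc : ((n + 1).choose 2 : ℚ) = (n.choose 2 : ℚ) + n := by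
      rw [Nat.cast_choose_two, Nat.cast_choose_two]
      push_cast
      ring
    have hs : (n + 1 - 1 : ℕ) = n := by omega
    rw [hs]
    field_simp
    rw [hsucc]
    ring

/-- Coalescence-event case of Theorem 2: with ℓ_j = j - 1, the probability that
the first m-1 lineages avoid coalescing at a birth event times the probability
that the m-th does coalesce equals 1/C(I,2). -/
theorem stmt_2 (I m : ℕ) (hI : 2 ≤ I) (hm : 1 ≤ m) (hmI : m - 1 < I) :
    (1 / ((I.choose 2 : ℚ) - ((m - 1 : ℕ).choose 2 : ℚ))) *
      (∏ j ∈ Finset.Icc 1 (m - 1),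
        (1 - ((j - 1 : ℕ) : ℚ) /
          ((I.choose 2 : ℚ) - ((j - 1 : ℕ).choose 2 : ℚ))))
      = 1 / (I.choose 2 : ℚ) := by
  rw [prod_aux I hI (m - 1) hmI]
  have hC : (0 : ℚ) < (I.choose 2 : ℚ) := by
    have := choose_two_lt 0 I hI (by omega); simpa using this
  have hCn : (0 : ℚ) < (I.choose 2 : ℚ) - ((m - 1 : ℕ).choose 2 : ℚ) :=
    sub_pos.mpr (choose_two_lt (m - 1) I hI hmI)
  field_simp
end
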